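/- arXiv:1403.8032 — 5 statements merged into one kernel-verified Lean document; each statement's English description precedes it below -/
import Mathlib

section
/- Let A be an n×n real matrix with the Z sign pattern. If v solves A v = u with u ≥ 0, and v is nonnegative with both at least one zero component and at least one positive component, then A is reducible. -/
/-- A matrix is reducible if the index set can be partitioned into two nonempty
disjoint sets `I`, `J` such that `A p q = 0` for all `p ∈ I`, `q ∈ J`. -/
def Matrix.IsReducibleMat {n : ℕ} (A : Matrix (Fin n) (Fin n) ℝ) : Prop :=
  ∃ I J : Set (Fin n), I.Nonempty ∧ J.Nonempty ∧ Disjoint I J ∧ I ∪ J = Set.univ ∧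
    ∀ p ∈ I, ∀ q ∈ J, A p q = 0

theorem stmt_1 {n : ℕ} (A : Matrix (Fin n) (Fin n) ℝ) (u v : Fin n → ℝ)
    (hA : ∀ p q, p ≠ q → A p q ≤ 0)
    (hu : ∀ i, 0 ≤ u i)
    (hAv : A.mulVec v = u)
    (hv : ∀ i, 0 ≤ v i)
    (hzero : ∃ q, v q = 0) (hpos : ∃ q, 0 < v q) :
    A.IsReducibleMat := by
  classical
  refine ⟨{p | v p = 0}, {p | 0 < v p}, hzero, hpos, ?_, ?_, ?_⟩
  · rw [Set.disjoint_left]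
    intro p hp hp'
    exact absurd hp (ne_of_gt hp')
  · ext p
    simp only [Set.mem_union, Set.mem_setOf_eq, Set.mem_univ, iff_true]
    rcases (hv p).lt_or_eq with h | h
    · exact Or.inr h
    · exact Or.inl h.symm
  · intro p hp q hq
    simp only [Set.mem_setOf_eq] at hp hq
    have hpq : p ≠ q := fun h => by rw [h] at hp; exact absurd hp (ne_of_gt hq)
    -- sum over q ≠ p of A p q * v q is ≥ 0 and each term ≤ 0
    have hsum : (A.mulVec v) p = ∑ j, A p j * v j := rfl
    have hup : 0 ≤ ∑ j, A p j * v j := by rw [← hsum, hAv]; exact hu p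
    have hsplit : ∑ j, A p j * v j = ∑ j ∈ Finset.univ.erase p, A p j * v j := by
      rw [Finset.sum_erase]
      rw [hp, mul_zero]
    have hterm : ∀ j ∈ Finset.univ.erase p, A p j * v j ≤ 0 := by
      intro j hj
      exact mul_nonpos_of_nonpos_of_nonneg (hA p j (Finset.ne_of_mem_erase hj).symm) (hv j)
    have hle : ∑ j ∈ Finset.univ.erase p, A p j * v j ≤ 0 :=
      Finset.sum_nonpos hterm
    have hzero' : ∀ j ∈ Finset.univ.erase p, A p j * v j = 0 := by
      have := (Finset.sum_eq_zero_iff_of_nonpos hterm).mp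
        (le_antisymm hle (hsplit ▸ hup))
      exact this
    have := hzero' q (Finset.mem_erase.mpr ⟨hpq.symm, Finset.mem_univ q⟩)
    exact (mul_eq_zero.mp this).resolve_right (ne_of_gt hq)
end

section
/- Let A be an irreducible n×n Z-matrix that has an eigenvalue with negative real part. If u ≥ 0 and u ≠ 0, then every solution v of A v = u has at least one strictly negative component. -/
/-!
Suppose `v ≥ 0`. Irreducibility forces `v > 0`: otherwise the zero set of `v` and its complement
would split `A` into blocks, since `(A v)_p = ∑_{r ≠ p} A p r v r ≤ 0` on that zero set. Then
`A v ≥ 0` says that `A` becomes weakly diagonally dominant after the similarity by `diag v`, so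
Gershgorin's theorem puts every eigenvalue in a disc centred at some `A k k ≥ 0` with radius at
most `A k k`, i.e. in the closed right half-plane.
-/

open Finset Matrix

theorem Matrix.exists_norm_sub_diag_le_of_mem_spectrum_weighted {K ι : Type*} [NormedField K]
    [Fintype ι] [DecidableEq ι] {A : Matrix ι ι K} {μ : K} (hμ : μ ∈ spectrum K A)
    {w : ι → K} (hw : ∀ i, w i ≠ 0) :
    ∃ k, ‖μ - A k k‖ ≤ ∑ j ∈ univ.erase k, ‖A k j‖ * ‖w j‖ / ‖w k‖ := by
  let D : (Matrix ι ι K)ˣ :=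
    { val := diagonal w⁻¹
      inv := diagonal w
      val_inv := by simp [diagonal_mul_diagonal, hw]
      inv_val := by simp [diagonal_mul_diagonal, hw] }
  have hB : μ ∈ spectrum K (D * A * D⁻¹ : Matrix ι ι K) := by rwa [spectrum.units_conjugate]
  rw [← spectrum_toLin', ← Module.End.hasEigenvalue_iff_mem_spectrum] at hB
  obtain ⟨k, hk⟩ := eigenvalue_mem_ball hB
  refine ⟨k, ?_⟩
  rw [mem_closedBall_iff_norm] at hk
  have hentry : ∀ j, (D * A * D⁻¹ : Matrix ι ι K) k j = (w k)⁻¹ * A k j * w j := by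
    intro j; simp [D, mul_diagonal, diagonal_mul]
  have hdiag : (w k)⁻¹ * A k k * w k = A k k := by rw [mul_comm, ← mul_assoc, mul_inv_cancel₀ (hw k), one_mul]
  have hnorm : ∀ j, ‖(w k)⁻¹ * A k j * w j‖ = ‖A k j‖ * ‖w j‖ / ‖w k‖ := by
    intro j; rw [norm_mul, norm_mul, norm_inv]; ring
  simpa only [hentry, hdiag, hnorm] using hk

theorem Matrix.re_nonneg_of_mem_spectrum_of_mulVec_nonneg {ι : Type*} [Fintype ι] [DecidableEq ι]
    {A : Matrix ι ι ℝ} (hA : ∀ p q, p ≠ q → A p q ≤ 0) {v : ι → ℝ} (hv : ∀ i, 0 < v i)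
    (hAv : ∀ i, 0 ≤ (A *ᵥ v) i) {μ : ℂ} (hμ : μ ∈ spectrum ℂ (A.map Complex.ofReal)) :
    0 ≤ μ.re := by
  obtain ⟨k, hk⟩ := exists_norm_sub_diag_le_of_mem_spectrum_weighted hμ
    (w := fun i => (v i : ℂ)) fun i => Complex.ofReal_ne_zero.mpr (hv i).ne'
  have hoff : ∑ j ∈ univ.erase k, ‖A k j‖ * v j ≤ A k k * v k := by
    have hrow : (A *ᵥ v) k = A k k * v k + ∑ j ∈ univ.erase k, A k j * v j :=
      (add_sum_erase _ _ (mem_univ k)).symm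
    have habs : ∀ j ∈ univ.erase k, ‖A k j‖ * v j = -(A k j * v j) := fun j hj => by
      rw [Real.norm_of_nonpos (hA k j (ne_of_mem_erase hj).symm), neg_mul]
    rw [sum_congr rfl habs, sum_neg_distrib]
    linarith [hAv k]
  have hradius : ∑ j ∈ univ.erase k, ‖(A.map Complex.ofReal) k j‖ * ‖(v j : ℂ)‖ / ‖(v k : ℂ)‖
      ≤ A k k := by
    simp only [map_apply, Complex.norm_real, Real.norm_of_nonneg (hv _).le, ← sum_div]
    rwa [div_le_iff₀ (hv k)]
  have hre : A k k - μ.re ≤ ‖μ - A k k‖ := by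
    simpa using Complex.re_le_norm ((A k k : ℂ) - μ) |>.trans_eq (norm_sub_rev _ _)
  simp only [map_apply] at hk hradius
  linarith

theorem Matrix.pos_of_mulVec_nonneg_of_not_isReducibleMat {n : ℕ} {A : Matrix (Fin n) (Fin n) ℝ}
    (hA : ∀ p q, p ≠ q → A p q ≤ 0) (hirr : ¬ A.IsReducibleMat) {v : Fin n → ℝ}
    (hv : ∀ i, 0 ≤ v i) (hv0 : v ≠ 0) (hAv : ∀ i, 0 ≤ (A *ᵥ v) i) (i : Fin n) : 0 < v i := by
  by_contra hvi
  refine hirr ⟨{p | v p = 0}, {q | 0 < v q}, ⟨i, le_antisymm (not_lt.mp hvi) (hv i)⟩, ?_,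
    Set.disjoint_left.mpr fun p hp hq => (ne_of_gt hq) hp, ?_, ?_⟩
  · obtain ⟨j, hj⟩ := Function.ne_iff.mp hv0
    exact ⟨j, (hv j).lt_of_ne' hj⟩
  · ext p
    simpa [eq_comm] using (hv p).eq_or_lt
  · intro p (hp : v p = 0) q (hq : 0 < v q)
    have hterm : ∀ r ∈ univ, A p r * v r ≤ 0 := fun r _ => by
      rcases eq_or_ne p r with rfl | hpr
      · simp [hp]
      · exact mul_nonpos_of_nonpos_of_nonneg (hA p r hpr) (hv r)
    have hrow : ∑ r, A p r * v r = 0 := le_antisymm (sum_nonpos hterm) (hAv p)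
    exact (mul_eq_zero.mp ((sum_eq_zero_iff_of_nonpos hterm).mp hrow q (mem_univ q))).resolve_right
      hq.ne'

theorem stmt_3 {n : ℕ} (A : Matrix (Fin n) (Fin n) ℝ) (u v : Fin n → ℝ)
    (hA : ∀ p q, p ≠ q → A p q ≤ 0)
    (hirr : ¬ A.IsReducibleMat)
    (hneg : ∃ μ ∈ spectrum ℂ (A.map Complex.ofReal), μ.re < 0)
    (hu : ∀ i, 0 ≤ u i) (hune : u ≠ 0)
    (hAv : A.mulVec v = u) :
    ∃ i, v i < 0 := by
  by_contra! hv
  subst hAv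
  have hv0 : v ≠ 0 := by
    rintro rfl
    exact hune (mulVec_zero A)
  obtain ⟨μ, hμ, hμre⟩ := hneg
  have hvpos := pos_of_mulVec_nonneg_of_not_isReducibleMat hA hirr hv hv0 hu
  exact hμre.not_ge (re_nonneg_of_mem_spectrum_of_mulVec_nonneg hA hvpos hu hμ)
end

section
/- Let A be an n×n Z-matrix that has an eigenvalue with strictly negative real part. Then there exists no componentwise strictly positive vector x with A x ≥ 0 componentwise. -/
/-!
Conjugating by `diag x` turns Gershgorin's theorem into a weighted version: every eigenvalue `μ`
lies in some disc `‖μ - a_kk‖ ≤ ∑_{j ≠ k} |a_kj| x_j / x_k`. For a Z-matrix with `A x ≥ 0` the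
radius is at most `a_kk`, so every such disc lies in the closed right half-plane.
-/

open Matrix Finset

variable {K n : Type*} [NormedField K] [Fintype n] [DecidableEq n]

theorem Matrix.spectrum_diagonal_inv_mul_mul_diagonal (A : Matrix n n K) {w : n → K}
    (hw : ∀ i, w i ≠ 0) : spectrum K (diagonal w⁻¹ * A * diagonal w) = spectrum K A :=
  spectrum.units_conjugate' (u :=
    { val := diagonal w
      inv := diagonal w⁻¹
      val_inv := by simp [diagonal_mul_diagonal, hw]
      inv_val := by simp [diagonal_mul_diagonal, hw] })

theorem eigenvalue_mem_ball_of_weights {A : Matrix n n K} {μ : K} (hμ : μ ∈ spectrum K A)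
    {w : n → K} (hw : ∀ i, w i ≠ 0) :
    ∃ k, μ ∈ Metric.closedBall (A k k) (∑ j ∈ univ.erase k, ‖A k j‖ * ‖w j‖ / ‖w k‖) := by
  have hB : Module.End.HasEigenvalue (toLin' (diagonal w⁻¹ * A * diagonal w)) μ := by
    rwa [Module.End.hasEigenvalue_iff_mem_spectrum, spectrum_toLin',
      spectrum_diagonal_inv_mul_mul_diagonal A hw]
  obtain ⟨k, hk⟩ := eigenvalue_mem_ball hB
  refine ⟨k, ?_⟩
  convert hk using 2
  · simp only [mul_diagonal, diagonal_mul, Pi.inv_apply]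
    field_simp [hw k]
  · refine sum_congr rfl fun j _ => ?_
    simp only [mul_diagonal, diagonal_mul, Pi.inv_apply, norm_mul, norm_inv]
    ring

theorem Matrix.sum_erase_abs_mul_le_diag_mul {A : Matrix n n ℝ} {x : n → ℝ} {k : n}
    (hA : ∀ j, k ≠ j → A k j ≤ 0) (hAx : 0 ≤ (A *ᵥ x) k) :
    ∑ j ∈ univ.erase k, |A k j| * x j ≤ A k k * x k := by
  have hrow : (A *ᵥ x) k = A k k * x k + ∑ j ∈ univ.erase k, A k j * x j :=
    (add_sum_erase _ (fun j => A k j * x j) (mem_univ k)).symm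
  have habs : ∑ j ∈ univ.erase k, |A k j| * x j = -∑ j ∈ univ.erase k, A k j * x j := by
    rw [← sum_neg_distrib]
    refine sum_congr rfl fun j hj => ?_
    rw [abs_of_nonpos (hA j (ne_of_mem_erase hj).symm), neg_mul]
  linarith

theorem Complex.re_nonneg_of_norm_sub_ofReal_le {z : ℂ} {a : ℝ} (h : ‖z - a‖ ≤ a) : 0 ≤ z.re := by
  have := (abs_le.mp ((abs_re_le_norm (z - a)).trans h)).1
  simp only [sub_re, ofReal_re] at this
  linarith

theorem stmt_4 {n : ℕ} (A : Matrix (Fin n) (Fin n) ℝ)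
    (hA : ∀ p q, p ≠ q → A p q ≤ 0)
    (hneg : ∃ μ ∈ spectrum ℂ (A.map Complex.ofReal), μ.re < 0) :
    ¬ ∃ x : Fin n → ℝ, (∀ i, 0 < x i) ∧ (∀ i, 0 ≤ A.mulVec x i) := by
  rintro ⟨x, hx, hAx⟩
  obtain ⟨μ, hμ, hre⟩ := hneg
  obtain ⟨k, hk⟩ := eigenvalue_mem_ball_of_weights hμ (w := fun i => (x i : ℂ))
    fun i => Complex.ofReal_ne_zero.mpr (hx i).ne'
  have hradius : ∑ j ∈ univ.erase k, ‖A.map Complex.ofReal k j‖ * ‖(x j : ℂ)‖ / ‖(x k : ℂ)‖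
      ≤ A k k := by
    simp only [map_apply, Complex.norm_real, Real.norm_eq_abs, abs_of_pos (hx _)]
    rw [← sum_div, div_le_iff₀ (hx k)]
    exact sum_erase_abs_mul_le_diag_mul (hA k) (hAx k)
  have hdisc : ‖μ - A k k‖ ≤ A k k := (mem_closedBall_iff_norm.mp hk).trans hradius
  linarith [Complex.re_nonneg_of_norm_sub_ofReal_le hdisc]
end

section
/- Let F be an entrywise nonnegative n×n matrix and V a nonsingular M-matrix with V⁻¹ ≥ 0 entrywise. Then all eigenvalues of F − V have negative real part if and only if the spectral radius of F V⁻¹ is less than 1. -/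
/-!
For a nonnegative matrix `P` and a real `t`, the matrix `t • 1 - P` has a nonnegative inverse iff
every eigenvalue of `P` has modulus `< t`. One way, Gelfand's formula makes the Neumann series
of `t⁻¹ • P` converge; the other way, applying the nonnegative inverse to `|x|` for an eigenvector
`x` bounds the eigenvalue. Letting `t` decrease to the largest modulus `r` of an eigenvalue, the
nonnegative resolvents would converge to a nonnegative inverse of `r • 1 - P` unless `r` is an
eigenvalue; so `r` is one, and "modulus `< t`" may be replaced by "real part `< t`".

With `P = s • 1 - (V - F)` for large `s`, stability of `F - V` thus means that the Z-matrix
`V - F` has a nonnegative inverse, and `V - F = (1 - F V⁻¹) V` together with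
`V (V - F)⁻¹ = 1 + F (V - F)⁻¹` shows this is equivalent to `1 - F V⁻¹` having one, i.e. to
`ρ(F V⁻¹) < 1`.
-/

open Filter Topology
open scoped NNReal ENNReal

theorem spectrum.tendsto_pow_atTop_nhds_zero_of_spectralRadius_lt_one {A : Type*} [NormedRing A]
    [NormedAlgebra ℂ A] [CompleteSpace A] {a : A} (ha : spectralRadius ℂ a < 1) :
    Tendsto (a ^ ·) atTop (𝓝 0) := by
  obtain ⟨r, hρr, hr1⟩ := ENNReal.lt_iff_exists_nnreal_btwn.mp ha
  have hlt : ∀ᶠ k : ℕ in atTop, (‖a ^ k‖₊ : ℝ≥0∞) ^ (1 / k : ℝ) < r :=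
    (spectrum.pow_nnnorm_pow_one_div_tendsto_nhds_spectralRadius a).eventually_lt_const hρr
  refine squeeze_zero_norm' ?_ (NNReal.tendsto_coe.mpr
    (NNReal.tendsto_pow_atTop_nhds_zero_of_lt_one (mod_cast hr1)))
  filter_upwards [hlt, eventually_ne_atTop 0] with k hk hk0
  rw [one_div, ← ENNReal.coe_rpow_of_nonneg _ (by positivity), ENNReal.coe_lt_coe] at hk
  have := pow_le_pow_left₀ zero_le hk.le k
  rw [NNReal.rpow_inv_natCast_pow _ hk0] at this
  exact_mod_cast this

namespace Matrix

variable {ι : Type*} [Fintype ι]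

theorem mul_apply_nonneg {R : Type*} [Semiring R] [PartialOrder R] [IsOrderedRing R]
    {A B : Matrix ι ι R} (hA : ∀ i j, 0 ≤ A i j) (hB : ∀ i j, 0 ≤ B i j) (i j : ι) :
    0 ≤ (A * B) i j :=
  Finset.sum_nonneg fun k _ => mul_nonneg (hA i k) (hB k j)

theorem norm_mul_norm_le_sum_of_mulVec_eq_smul {C : Matrix ι ι ℝ} (hC : ∀ i j, 0 ≤ C i j)
    {x : ι → ℂ} {μ : ℂ} (hx : C.map Complex.ofReal *ᵥ x = μ • x) (i : ι) :
    ‖μ‖ * ‖x i‖ ≤ ∑ j, C i j * ‖x j‖ := by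
  have hxi := congrFun hx i
  simp only [mulVec, dotProduct, map_apply, Pi.smul_apply, smul_eq_mul] at hxi
  calc ‖μ‖ * ‖x i‖ = ‖∑ j, (C i j : ℂ) * x j‖ := by rw [hxi, norm_mul]
    _ ≤ ∑ j, ‖(C i j : ℂ) * x j‖ := norm_sum_le _ _
    _ = ∑ j, C i j * ‖x j‖ := by
      simp only [norm_mul, Complex.norm_real, Real.norm_of_nonneg (hC i _)]

variable [DecidableEq ι]

theorem exists_mulVec_eq_smul_of_mem_spectrum {K : Type*} [Field K] {A : Matrix ι ι K} {μ : K}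
    (hμ : μ ∈ spectrum K A) : ∃ x ≠ 0, A *ᵥ x = μ • x := by
  rw [← spectrum_toLin', ← Module.End.hasEigenvalue_iff_mem_spectrum] at hμ
  obtain ⟨x, hx⟩ := hμ.exists_hasEigenvector
  exact ⟨x, hx.2, by simpa using hx.apply_eq_smul⟩

theorem map_ofReal_smul_one_sub (A : Matrix ι ι ℝ) (r : ℝ) :
    (r • 1 - A).map Complex.ofReal = algebraMap ℂ _ (r : ℂ) - A.map Complex.ofReal := by
  ext i j
  by_cases hij : i = j <;> simp [algebraMap_matrix_apply, hij]

theorem ofReal_mem_spectrum_map_ofReal_iff {A : Matrix ι ι ℝ} {r : ℝ} :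
    (r : ℂ) ∈ spectrum ℂ (A.map Complex.ofReal) ↔ r ∈ spectrum ℝ A := by
  rw [spectrum.mem_iff, spectrum.mem_iff, ← map_ofReal_smul_one_sub,
    Algebra.algebraMap_eq_smul_one, isUnit_iff_isUnit_det, isUnit_iff_isUnit_det,
    ← show ((r • 1 - A).det : ℂ) = ((r • 1 - A).map Complex.ofReal).det from
      Complex.ofRealHom.map_det _]
  simp [isUnit_iff_ne_zero]

theorem norm_lt_of_nonneg_mul_eq_one {C W : Matrix ι ι ℝ} {t : ℝ} (hC : ∀ i j, 0 ≤ C i j)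
    (hW : ∀ i j, 0 ≤ W i j) (hWC : W * (t • 1 - C) = 1) {μ : ℂ}
    (hμ : μ ∈ spectrum ℂ (C.map Complex.ofReal)) : ‖μ‖ < t := by
  obtain ⟨x, hx0, hx⟩ := exists_mulVec_eq_smul_of_mem_spectrum hμ
  by_contra! ht
  set y : ι → ℝ := fun i => ‖x i‖
  have hCy : (t • 1 - C) *ᵥ y ≤ 0 := fun i => by
    have := norm_mul_norm_le_sum_of_mulVec_eq_smul hC hx i
    rw [sub_mulVec, smul_mulVec, one_mulVec]
    simp only [Pi.sub_apply, Pi.smul_apply, smul_eq_mul, Pi.zero_apply, mulVec, dotProduct, y]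
    nlinarith [norm_nonneg (x i)]
  have hy : y ≤ 0 :=
    calc y = W *ᵥ ((t • 1 - C) *ᵥ y) := by rw [mulVec_mulVec, hWC, one_mulVec]
      _ ≤ 0 := fun i => Finset.sum_nonpos fun j _ =>
        mul_nonpos_of_nonneg_of_nonpos (hW i j) (hCy j)
  exact hx0 (funext fun i => norm_le_zero_iff.mp (hy i))

section

attribute [local instance] Matrix.linftyOpNormedRing Matrix.linftyOpNormedAlgebra

theorem tendsto_pow_atTop_nhds_zero_of_forall_norm_lt_one {A : Matrix ι ι ℝ}
    (hA : ∀ μ ∈ spectrum ℂ (A.map Complex.ofReal), ‖μ‖ < 1) :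
    Tendsto (A ^ ·) atTop (𝓝 0) := by
  cases isEmpty_or_nonempty ι
  · exact tendsto_const_nhds.congr fun k => Subsingleton.elim _ _
  have hρ : spectralRadius ℂ (A.map Complex.ofReal) < 1 := by
    simpa using spectrum.spectralRadius_lt_of_forall_lt _ (r := 1) fun μ hμ => mod_cast hA μ hμ
  have hre := ((continuous_id.matrix_map Complex.continuous_re).tendsto 0).comp
    (spectrum.tendsto_pow_atTop_nhds_zero_of_spectralRadius_lt_one hρ)
  refine (hre.congr fun k => ?_).trans (by simp)
  have hpow : (A ^ k).map Complex.ofReal = A.map Complex.ofReal ^ k :=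
    map_pow Complex.ofRealHom.mapMatrix A k
  simp [← hpow, map_map, Function.comp_def]

end

theorem exists_nonneg_mul_eq_one_of_forall_norm_lt {C : Matrix ι ι ℝ} {t : ℝ}
    (hC : ∀ i j, 0 ≤ C i j) (h : ∀ μ ∈ spectrum ℂ (C.map Complex.ofReal), ‖μ‖ < t) :
    ∃ W : Matrix ι ι ℝ, (∀ i j, 0 ≤ W i j) ∧ (t • 1 - C) * W = 1 := by
  cases isEmpty_or_nonempty ι
  · exact ⟨0, fun i => isEmptyElim i, Subsingleton.elim _ _⟩
  obtain ⟨μ, hμ⟩ := spectrum.nonempty_of_isAlgClosed_of_finiteDimensional ℂ (C.map Complex.ofReal)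
  have ht : 0 < t := (norm_nonneg μ).trans_lt (h μ hμ)
  set D := t⁻¹ • C
  have hD : ∀ ν ∈ spectrum ℂ (D.map Complex.ofReal), ‖ν‖ < 1 := by
    have hDmap : D.map Complex.ofReal = (t⁻¹ : ℂ) • C.map Complex.ofReal := by
      ext i j; simp [D]
    intro ν hν
    rw [hDmap, spectrum.smul_eq_smul _ _ ⟨μ, hμ⟩, Set.mem_smul_set] at hν
    obtain ⟨κ, hκ, rfl⟩ := hν
    rw [norm_smul, norm_inv, Complex.norm_real, Real.norm_of_nonneg ht.le, inv_mul_lt_one₀ ht]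
    exact h κ hκ
  have hunit : IsUnit (1 - D) := by
    have h1 : ((1 : ℝ) : ℂ) ∉ spectrum ℂ (D.map Complex.ofReal) := fun h1 => by
      simpa using hD _ h1
    rw [ofReal_mem_spectrum_map_ofReal_iff, spectrum.notMem_iff, map_one] at h1
    exact h1
  set R := (1 - D)⁻¹
  have hpartial : ∀ k, ∑ j ∈ Finset.range k, D ^ j = R * (1 - D ^ k) := fun k => by
    rw [← mul_neg_geom_sum, ← mul_assoc, nonsing_inv_mul _ ((isUnit_iff_isUnit_det _).mp hunit),
      one_mul]
  have hlim : Tendsto (fun k => ∑ j ∈ Finset.range k, D ^ j) atTop (𝓝 R) := by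
    simp_rw [hpartial]
    simpa using ((tendsto_pow_atTop_nhds_zero_of_forall_norm_lt_one hD).const_sub 1).const_mul R
  have hDnonneg : ∀ i j, 0 ≤ D i j := fun i j => mul_nonneg (inv_nonneg.mpr ht.le) (hC i j)
  have hR : ∀ i j, 0 ≤ R i j := fun i j => by
    refine ge_of_tendsto' ((continuous_apply_apply i j).tendsto R |>.comp hlim) fun k => ?_
    show 0 ≤ (∑ m ∈ Finset.range k, D ^ m) i j
    rw [sum_apply]
    exact Finset.sum_nonneg fun m _ => pow_apply_nonneg hDnonneg m i j
  refine ⟨t⁻¹ • R, fun i j => mul_nonneg (inv_nonneg.mpr ht.le) (hR i j), ?_⟩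
  have hsplit : t • 1 - C = t • (1 - D) := by
    rw [smul_sub, smul_smul, mul_inv_cancel₀ ht.ne', one_smul]
  rw [hsplit, smul_mul_smul_comm, mul_inv_cancel₀ ht.ne', one_smul,
    mul_nonsing_inv _ ((isUnit_iff_isUnit_det _).mp hunit)]

/-- Weak Perron–Frobenius: the spectral radius of a nonnegative matrix is an eigenvalue. -/
theorem exists_real_mem_spectrum_norm_le {P : Matrix ι ι ℝ} (hP : ∀ i j, 0 ≤ P i j) {μ : ℂ}
    (hμ : μ ∈ spectrum ℂ (P.map Complex.ofReal)) :
    ∃ r : ℝ, ‖μ‖ ≤ r ∧ (r : ℂ) ∈ spectrum ℂ (P.map Complex.ofReal) := by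
  obtain ⟨ν, hν, hmax⟩ := Set.exists_max_image _ (‖·‖) (finite_spectrum _) ⟨μ, hμ⟩
  refine ⟨‖ν‖, hmax μ hμ, ?_⟩
  by_contra hr
  rw [ofReal_mem_spectrum_map_ofReal_iff, spectrum.notMem_iff, Algebra.algebraMap_eq_smul_one,
    isUnit_iff_isUnit_det] at hr
  have hresolvent : ∀ t > ‖ν‖, ∀ i j, 0 ≤ (t • 1 - P)⁻¹ i j := fun t ht => by
    obtain ⟨W, hW, hPW⟩ :=
      exists_nonneg_mul_eq_one_of_forall_norm_lt hP fun κ hκ => (hmax κ hκ).trans_lt ht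
    rwa [inv_eq_right_inv hPW]
  have hcont : ContinuousAt (fun t : ℝ => (t • 1 - P)⁻¹) ‖ν‖ := by
    obtain ⟨u, hu⟩ := hr
    refine (continuousAt_matrix_inv _ ?_).comp (by fun_prop)
    exact hu ▸ NormedRing.inverse_continuousAt u
  have hlimit : ∀ i j, 0 ≤ (‖ν‖ • 1 - P)⁻¹ i j := fun i j =>
    ge_of_tendsto ((continuous_apply_apply i j).continuousAt.tendsto.comp
      (hcont.tendsto.mono_left nhdsWithin_le_nhds))
      (eventually_nhdsWithin_of_forall (s := Set.Ioi ‖ν‖) fun t ht => hresolvent t ht i j)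
  exact lt_irrefl _ (norm_lt_of_nonneg_mul_eq_one hP hlimit (nonsing_inv_mul _ hr) hν)

theorem forall_norm_lt_iff_exists_nonneg_mul_eq_one {C : Matrix ι ι ℝ} {t : ℝ}
    (hC : ∀ i j, 0 ≤ C i j) :
    (∀ μ ∈ spectrum ℂ (C.map Complex.ofReal), ‖μ‖ < t) ↔
      ∃ W : Matrix ι ι ℝ, (∀ i j, 0 ≤ W i j) ∧ (t • 1 - C) * W = 1 :=
  ⟨exists_nonneg_mul_eq_one_of_forall_norm_lt hC, fun ⟨_, hW, hCW⟩ _ hμ =>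
    norm_lt_of_nonneg_mul_eq_one hC hW (mul_eq_one_comm.mp hCW) hμ⟩

theorem forall_re_lt_iff_exists_nonneg_mul_eq_one {P : Matrix ι ι ℝ} {t : ℝ}
    (hP : ∀ i j, 0 ≤ P i j) :
    (∀ μ ∈ spectrum ℂ (P.map Complex.ofReal), μ.re < t) ↔
      ∃ W : Matrix ι ι ℝ, (∀ i j, 0 ≤ W i j) ∧ (t • 1 - P) * W = 1 := by
  rw [← forall_norm_lt_iff_exists_nonneg_mul_eq_one hP]
  refine ⟨fun h μ hμ => ?_, fun h μ hμ => (Complex.re_le_norm μ).trans_lt (h μ hμ)⟩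
  obtain ⟨r, hμr, hr⟩ := exists_real_mem_spectrum_norm_le hP hμ
  exact hμr.trans_lt (by simpa using h r hr)

/-- The M-matrix theorem: a Z-matrix is a nonsingular M-matrix iff its spectrum lies in the open
right half-plane. -/
theorem forall_re_pos_iff_exists_nonneg_mul_eq_one {A : Matrix ι ι ℝ}
    (hA : ∀ i j, i ≠ j → A i j ≤ 0) :
    (∀ μ ∈ spectrum ℂ (A.map Complex.ofReal), 0 < μ.re) ↔
      ∃ W : Matrix ι ι ℝ, (∀ i j, 0 ≤ W i j) ∧ A * W = 1 := by
  set s := ∑ i, |A i i|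
  have hP : ∀ i j, 0 ≤ (s • 1 - A) i j := fun i j => by
    by_cases hij : i = j
    · subst hij
      have := (le_abs_self (A i i)).trans
        (Finset.single_le_sum (fun k _ => abs_nonneg (A k k)) (Finset.mem_univ i))
      simpa using this
    · simpa [one_apply_ne hij] using hA i j hij
  rw [← sub_sub_cancel (s • 1) A, ← forall_re_lt_iff_exists_nonneg_mul_eq_one hP,
    map_ofReal_smul_one_sub,
    ← spectrum.singleton_sub_eq, Set.singleton_sub, Set.forall_mem_image]
  simp

theorem exists_nonneg_mul_sub_eq_one_iff {F V : Matrix ι ι ℝ} (hF : ∀ i j, 0 ≤ F i j)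
    (hV : IsUnit V.det) (hVinv : ∀ i j, 0 ≤ V⁻¹ i j) :
    (∃ W : Matrix ι ι ℝ, (∀ i j, 0 ≤ W i j) ∧ (V - F) * W = 1) ↔
      ∃ W : Matrix ι ι ℝ, (∀ i j, 0 ≤ W i j) ∧ (1 - F * V⁻¹) * W = 1 := by
  have hfactor : 1 - F * V⁻¹ = (V - F) * V⁻¹ := by
    rw [sub_mul, mul_nonsing_inv _ hV]
  constructor
  · rintro ⟨W, hW, hVFW⟩
    have hVW : V * W = 1 + F * W := by rw [← hVFW, ← add_mul, sub_add_cancel]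
    refine ⟨V * W, fun i j => ?_, ?_⟩
    · rw [hVW, add_apply, one_apply]
      exact add_nonneg (by split_ifs <;> norm_num) (mul_apply_nonneg hF hW i j)
    · rw [hfactor, mul_assoc, ← mul_assoc V⁻¹, nonsing_inv_mul _ hV, one_mul, hVFW]
  · rintro ⟨W, hW, hW1⟩
    exact ⟨V⁻¹ * W, mul_apply_nonneg hVinv hW, by rw [← mul_assoc, ← hfactor, hW1]⟩

end Matrix

theorem stmt_7 {n : ℕ} (F V : Matrix (Fin n) (Fin n) ℝ)
    (hF : ∀ i j, 0 ≤ F i j)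
    (hVZ : ∀ p q, p ≠ q → V p q ≤ 0)
    (hVunit : IsUnit V.det)
    (hVinv : ∀ i j, 0 ≤ V⁻¹ i j) :
    (∀ μ ∈ spectrum ℂ ((F - V).map Complex.ofReal), μ.re < 0) ↔
      (∀ μ ∈ spectrum ℂ ((F * V⁻¹).map Complex.ofReal), ‖μ‖ < 1) := by
  have hZ : ∀ i j, i ≠ j → (V - F) i j ≤ 0 := fun i j hij => by
    simpa using (hVZ i j hij).trans (hF i j)
  have hneg : (F - V).map Complex.ofReal = -(V - F).map Complex.ofReal := by
    rw [← Matrix.map_neg _ Complex.ofReal_neg, neg_sub]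
  rw [Matrix.forall_norm_lt_iff_exists_nonneg_mul_eq_one (Matrix.mul_apply_nonneg hF hVinv),
    one_smul, ← Matrix.exists_nonneg_mul_sub_eq_one_iff hF hVunit hVinv,
    ← Matrix.forall_re_pos_iff_exists_nonneg_mul_eq_one hZ, hneg, ← spectrum.neg_eq]
  exact neg_surjective.forall.trans (by simp)
end

section
/- Let A be an n×n Z-matrix (off-diagonal entries nonpositive) such that there exists a strictly positive vector x with A x ≥ 0 componentwise. Then every eigenvalue of A has nonnegative real part. -/
theorem stmt_11 {n : ℕ} (A : Matrix (Fin n) (Fin n) ℝ)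
    (hA : ∀ p q, p ≠ q → A p q ≤ 0)
    (x : Fin n → ℝ) (hx : ∀ i, 0 < x i) (hAx : ∀ i, 0 ≤ A.mulVec x i) :
    ∀ μ ∈ spectrum ℂ (A.map Complex.ofReal), 0 ≤ μ.re := by
  intro μ hμ
  rw [spectrum.mem_iff, Matrix.isUnit_iff_isUnit_det, isUnit_iff_ne_zero, not_not,
      ← Matrix.exists_mulVec_eq_zero_iff] at hμ
  obtain ⟨v, hv0, hveq⟩ := hμ
  have hAv : ∀ p, ∑ q, (A p q : ℂ) * v q = μ * v p := by
    intro p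
    rw [Algebra.algebraMap_eq_smul_one, Matrix.sub_mulVec, Matrix.smul_mulVec,
        Matrix.one_mulVec, sub_eq_zero] at hveq
    have h := congrFun hveq p
    have h2 : (A.map Complex.ofReal).mulVec v p = ∑ q, (A p q : ℂ) * v q := by
      simp [Matrix.mulVec, dotProduct, Matrix.map_apply]
    rw [← h2, ← h]
    simp
  obtain ⟨q0, hq0⟩ := Function.ne_iff.mp hv0
  have hne : (Finset.univ : Finset (Fin n)).Nonempty := ⟨q0, Finset.mem_univ q0⟩
  obtain ⟨p, -, hp⟩ := Finset.exists_max_image Finset.univ (fun q => ‖v q‖ / x q) hne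
  have hbound : ∀ q, ‖v q‖ * x p ≤ ‖v p‖ * x q := by
    intro q
    have := hp q (Finset.mem_univ q)
    exact (div_le_div_iff₀ (hx q) (hx p)).mp this
  have hvp : 0 < ‖v p‖ := by
    have h1 := hbound q0
    have h2 : 0 < ‖v q0‖ := norm_pos_iff.mpr hq0
    nlinarith [hx p, hx q0, norm_nonneg (v p)]
  have hrow : ∑ q ∈ Finset.univ.erase p, (A p q : ℂ) * v q = (μ - (A p p : ℂ)) * v p := by
    have h2 := Finset.sum_erase_add Finset.univ (fun q => (A p q : ℂ) * v q) (Finset.mem_univ p)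
    rw [hAv p] at h2
    linear_combination h2
  have hnorm : ‖μ - (A p p : ℂ)‖ * ‖v p‖ ≤
      ∑ q ∈ Finset.univ.erase p, (-(A p q)) * ‖v q‖ := by
    rw [← norm_mul, ← hrow]
    calc ‖∑ q ∈ Finset.univ.erase p, (A p q : ℂ) * v q‖
        ≤ ∑ q ∈ Finset.univ.erase p, ‖(A p q : ℂ) * v q‖ := norm_sum_le _ _
      _ = ∑ q ∈ Finset.univ.erase p, (-(A p q)) * ‖v q‖ := by
          apply Finset.sum_congr rfl
          intro q hq
          rw [norm_mul, Complex.norm_real, Real.norm_eq_abs,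
            abs_of_nonpos (hA p q (Finset.ne_of_mem_erase hq).symm)]
  have h3 : (∑ q ∈ Finset.univ.erase p, (-(A p q)) * ‖v q‖) * x p ≤
      (∑ q ∈ Finset.univ.erase p, (-(A p q)) * x q) * ‖v p‖ := by
    rw [Finset.sum_mul, Finset.sum_mul]
    apply Finset.sum_le_sum
    intro q hq
    have hAq : 0 ≤ -(A p q) := neg_nonneg.mpr (hA p q (Finset.ne_of_mem_erase hq).symm)
    have := hbound q
    nlinarith
  have h4 : ∑ q ∈ Finset.univ.erase p, (-(A p q)) * x q = A p p * x p - A.mulVec x p := by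
    have h : (∑ q ∈ Finset.univ.erase p, A p q * x q) + A p p * x p = ∑ q, A p q * x q := by
      simpa using Finset.sum_erase_add Finset.univ (fun q => A p q * x q) (Finset.mem_univ p)
    have hm : A.mulVec x p = ∑ q, A p q * x q := by
      simp [Matrix.mulVec, dotProduct]
    have hneg : ∑ q ∈ Finset.univ.erase p, (-(A p q)) * x q =
        -∑ q ∈ Finset.univ.erase p, A p q * x q := by
      rw [← Finset.sum_neg_distrib]
      exact Finset.sum_congr rfl fun q _ => by ring
    rw [hneg, hm]
    linarith [h]
  have hre : A p p - μ.re ≤ ‖μ - (A p p : ℂ)‖ := by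
    have h1 : |(μ - (A p p : ℂ)).re| ≤ ‖μ - (A p p : ℂ)‖ := Complex.abs_re_le_norm _
    have h2 : (μ - (A p p : ℂ)).re = μ.re - A p p := by simp
    rw [h2] at h1
    cases abs_cases (μ.re - A p p) with
    | inl h => linarith [h.1]
    | inr h => linarith [h.1]
  have key : ‖μ - (A p p : ℂ)‖ * x p ≤ A p p * x p - A.mulVec x p := by
    have c1 : ‖μ - (A p p : ℂ)‖ * ‖v p‖ * x p ≤
        (A p p * x p - A.mulVec x p) * ‖v p‖ := by
      calc ‖μ - (A p p : ℂ)‖ * ‖v p‖ * x p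
          ≤ (∑ q ∈ Finset.univ.erase p, (-(A p q)) * ‖v q‖) * x p := by
            have := hnorm
            nlinarith [hx p]
        _ ≤ (∑ q ∈ Finset.univ.erase p, (-(A p q)) * x q) * ‖v p‖ := h3
        _ = (A p p * x p - A.mulVec x p) * ‖v p‖ := by rw [h4]
    nlinarith [hvp, norm_nonneg (μ - (A p p : ℂ))]
  have := hAx p
  nlinarith [hx p, norm_nonneg (μ - (A p p : ℂ))]
end
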